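/- arXiv:2011.06435 — 2 statements merged into one kernel-verified Lean document; each statement's English description precedes it below -/
import Mathlib

section
/- Let G be a graph in which every vertex has even degree, with vertices v_1,...,v_n, and suppose its Seidel matrix S has rank n-1. Let φ be the primitive integer nullspace vector of S. Then for all 1 ≤ i, j ≤ n, φ_i - φ_j ≡ 2(d(v_i) - d(v_j)) (mod 8). -/
/-!
Write `σ = ∑ⱼ φⱼ` and `Nᵢ = ∑_{j ∼ i} φⱼ`. The row `i` of `Sφ = 0` reads `φᵢ = σ - 2Nᵢ`, so
primitivity forces `σ`, and with it every `φᵢ`, to be odd. A congruence `φⱼ ≡ c (mod m)` for all `j`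
gives `Nᵢ ≡ dᵢ c (mod m)`, hence `φᵢ ≡ σ - 2dᵢc (mod 2m)`. Starting from `φⱼ ≡ 1 (mod 2)`, one step
and the evenness of the degrees give `φⱼ ≡ σ (mod 4)`; a second step gives `φᵢ ≡ σ - 2dᵢσ (mod 8)`,
and `2(dᵢ - dⱼ)(σ + 1)` is divisible by `8`.
-/

open Matrix Finset

def seidelMatrix {n : ℕ} (G : SimpleGraph (Fin n)) [DecidableRel G.Adj] :
    Matrix (Fin n) (Fin n) ℤ :=
  Matrix.of fun i j => if i = j then 0 else if G.Adj i j then -1 else 1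

theorem Finset.sum_modEq_card_mul {α : Type*} {s : Finset α} {f : α → ℤ} {c m : ℤ}
    (h : ∀ x ∈ s, f x ≡ c [ZMOD m]) : ∑ x ∈ s, f x ≡ #s * c [ZMOD m] := by
  simpa using Int.ModEq.sum h

section

variable {n : ℕ}

theorem seidelMatrix_mulVec_apply (G : SimpleGraph (Fin n)) [DecidableRel G.Adj] (x : Fin n → ℤ)
    (i : Fin n) :
    (seidelMatrix G *ᵥ x) i = ∑ j, x j - x i - 2 * ∑ j ∈ G.neighborFinset i, x j := by
  have hterm : ∀ j, seidelMatrix G i j * x j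
      = x j - (if i = j then x j else 0) - 2 * (if G.Adj i j then x j else 0) := by
    intro j
    by_cases hij : i = j
    · subst hij; simp [seidelMatrix]
    · by_cases hadj : G.Adj i j
      · simp [seidelMatrix, hij, hadj]; ring
      · simp [seidelMatrix, hij, hadj]
  simp only [mulVec, dotProduct, hterm, sum_sub_distrib, ← mul_sum, sum_ite_eq, mem_univ,
    if_true, SimpleGraph.neighborFinset_eq_filter, sum_filter]

variable {G : SimpleGraph (Fin n)} [DecidableRel G.Adj] {φ : Fin n → ℤ}
  (hnull : seidelMatrix G *ᵥ φ = 0)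
include hnull

theorem eq_sum_sub_two_mul_sum_neighborFinset_of_seidelMatrix_mulVec_eq_zero (i : Fin n) :
    φ i = ∑ j, φ j - 2 * ∑ j ∈ G.neighborFinset i, φ j := by
  have := seidelMatrix_mulVec_apply G φ i
  rw [hnull, Pi.zero_apply] at this
  linarith

theorem odd_sum_of_seidelMatrix_mulVec_eq_zero (hgcd : univ.gcd φ = 1) : Odd (∑ j, φ j) := by
  refine Int.not_even_iff_odd.mp fun ⟨m, hm⟩ => ?_
  have : (2 : ℤ) ∣ univ.gcd φ := dvd_gcd fun k _ =>
    ⟨m - ∑ j ∈ G.neighborFinset k, φ j, by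
      rw [eq_sum_sub_two_mul_sum_neighborFinset_of_seidelMatrix_mulVec_eq_zero hnull k, hm]; ring⟩
  rw [hgcd] at this
  norm_num at this

theorem odd_of_seidelMatrix_mulVec_eq_zero (hgcd : univ.gcd φ = 1) (i : Fin n) : Odd (φ i) := by
  rw [eq_sum_sub_two_mul_sum_neighborFinset_of_seidelMatrix_mulVec_eq_zero hnull i]
  exact (odd_sum_of_seidelMatrix_mulVec_eq_zero hnull hgcd).sub_even (even_two_mul _)

theorem modEq_of_seidelMatrix_mulVec_eq_zero {c m : ℤ} (h : ∀ j, φ j ≡ c [ZMOD m]) (i : Fin n) :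
    φ i ≡ ∑ j, φ j - 2 * (G.degree i * c) [ZMOD 2 * m] := by
  have hN : ∑ j ∈ G.neighborFinset i, φ j ≡ G.degree i * c [ZMOD m] := by
    simpa using sum_modEq_card_mul fun j (_ : j ∈ G.neighborFinset i) => h j
  rw [eq_sum_sub_two_mul_sum_neighborFinset_of_seidelMatrix_mulVec_eq_zero hnull i]
  exact (hN.mul_left' (c := 2)).sub_left _

end

theorem seidel_null_vector_mod_eight_general {n : ℕ} (G : SimpleGraph (Fin n))
    [DecidableRel G.Adj] (φ : Fin n → ℤ)
    (heven : ∀ v, Even (G.degree v))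
    (hnull : (seidelMatrix G).mulVec φ = 0)
    (hgcd : Finset.univ.gcd φ = 1) :
    ∀ i j, φ i - φ j ≡ 2 * ((G.degree i : ℤ) - (G.degree j : ℤ)) [ZMOD 8] := by
  set σ := ∑ j, φ j
  have hdeg : ∀ k, 2 * ((G.degree k : ℤ) * 1) ≡ 0 [ZMOD 4] := fun k => by
    obtain ⟨u, hu⟩ := heven k
    exact Int.modEq_zero_iff_dvd.mpr ⟨u, by rw [hu]; push_cast; ring⟩
  have hmod2 : ∀ k, φ k ≡ 1 [ZMOD 2] := fun k =>
    Int.odd_iff.mp (odd_of_seidelMatrix_mulVec_eq_zero hnull hgcd k)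
  have hmod4 : ∀ k, φ k ≡ σ [ZMOD 4] := fun k => by
    simpa using (modEq_of_seidelMatrix_mulVec_eq_zero hnull hmod2 k).trans ((hdeg k).sub_left σ)
  have hmod8 := modEq_of_seidelMatrix_mulVec_eq_zero hnull hmod4
  intro i j
  obtain ⟨a, ha⟩ : Odd σ := odd_sum_of_seidelMatrix_mulVec_eq_zero hnull hgcd
  obtain ⟨u, hu⟩ := heven i
  obtain ⟨v, hv⟩ := heven j
  refine ((hmod8 i).sub (hmod8 j)).trans (Int.modEq_iff_dvd.mpr ⟨(a + 1) * (u - v), ?_⟩)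
  rw [hu, hv, ha]
  push_cast
  ring

theorem seidel_null_vector_mod_eight {n : ℕ} (G : SimpleGraph (Fin n))
    [DecidableRel G.Adj] (φ : Fin n → ℤ)
    (heven : ∀ v, Even (G.degree v))
    (hrank : (seidelMatrix G).rank = n - 1)
    (hnull : (seidelMatrix G).mulVec φ = 0)
    (hgcd : Finset.univ.gcd φ = 1) :
    ∀ i j, φ i - φ j ≡ 2 * ((G.degree i : ℤ) - (G.degree j : ℤ)) [ZMOD 8] :=
  seidel_null_vector_mod_eight_general G φ heven hnull hgcd
end

section
/- For every k ≥ 1 there exists a graph of order 4k + 1 whose Seidel matrix S is singular with one-dimensional nullspace, such that the primitive integer nullspace vector φ has maximum entry 5^{k-1} and sum of entries 5^k. In particular, for k ≥ 2 the nullspace of S contains no vector with all entries ±1. -/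
open Matrix Finset

/-!
Step `m` of the construction adds a path `P₄` whose two ends are joined to all earlier vertices;
starting from a single vertex, step `0` produces `C₅`. Giving the path of step `m` the weight
`5 ^ m`, every row sum that changes at step `m` is `5 ^ m` times a row sum of the Seidel matrix of
`C₅`, which vanishes; so the weights form a null vector, of entry sum `5 ^ k`.

Modulo 2 a Seidel matrix is `J - I`, so the entries of an integer null vector share their parity.
Halving then shows that a null vector with a zero entry vanishes: the nullspace is spanned by the
weight vector, whose entries `1` and `5 ^ (k - 1)` rule out a `±1` null vector for `k ≥ 2`.
-/

lemma Matrix.rank_add_one_of_ker_mulVecLin_eq_span {R ι : Type*} [CommRing R] [IsDomain R]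
    [Fintype ι] (A : Matrix ι ι R) {v : ι → R} (hv : v ≠ 0)
    (hker : LinearMap.ker A.mulVecLin = R ∙ v) : A.rank + 1 = Fintype.card ι := by
  have hspan : Module.rank R (R ∙ v) = 1 := by
    simpa using (LinearEquiv.toSpanNonzeroSingleton R _ v hv).lift_rank_eq.symm
  have h := LinearMap.rank_range_add_rank_ker A.mulVecLin
  rw [hker, hspan, rank_fun'] at h
  have hfin : Module.rank R (LinearMap.range A.mulVecLin) < Cardinal.aleph0 :=
    (self_le_add_right _ _).trans_lt (h ▸ Cardinal.natCast_lt_aleph0)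
  have := congrArg Cardinal.toNat h
  rwa [Cardinal.toNat_add hfin Cardinal.one_lt_aleph0, Cardinal.toNat_natCast,
    Cardinal.one_toNat] at this

lemma Finset.gcd_eq_one_of_eq_one {ι : Type*} {s : Finset ι} {f : ι → ℤ} {i : ι} (hi : i ∈ s)
    (h : f i = 1) : s.gcd f = 1 := by
  rw [← Finset.normalize_gcd, normalize_eq_one]
  exact isUnit_of_dvd_one (h ▸ Finset.gcd_dvd hi)

section Seidel

variable {n : ℕ} (G : SimpleGraph (Fin n)) [DecidableRel G.Adj]

lemma seidelMatrix_apply_intCast_zmod_two (i j : Fin n) :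
    ((seidelMatrix G i j : ℤ) : ZMod 2) = if i = j then 0 else 1 := by
  unfold seidelMatrix
  split_ifs <;> simp_all [of_apply]

lemma seidelMatrix_mulVec_intCast_zmod_two (θ : Fin n → ℤ) (i : Fin n) :
    (((seidelMatrix G *ᵥ θ) i : ℤ) : ZMod 2) = ∑ j, (θ j : ZMod 2) - θ i := by
  simp only [mulVec, dotProduct, Int.cast_sum, Int.cast_mul,
    seidelMatrix_apply_intCast_zmod_two, ite_mul, zero_mul, one_mul]
  rw [Finset.sum_ite, Finset.sum_const_zero, zero_add, Finset.filter_ne,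
    Finset.sum_erase_eq_sub (mem_univ i)]

lemma intCast_zmod_two_eq_of_seidelMatrix_mulVec_eq_zero {θ : Fin n → ℤ}
    (hθ : seidelMatrix G *ᵥ θ = 0) (i j : Fin n) : (θ i : ZMod 2) = θ j := by
  have h (i : Fin n) : (θ i : ZMod 2) = ∑ j, (θ j : ZMod 2) := by
    have := seidelMatrix_mulVec_intCast_zmod_two G θ i
    rwa [hθ, Pi.zero_apply, Int.cast_zero, eq_comm, sub_eq_zero, eq_comm] at this
  rw [h i, h j]

-- All entries share the parity of `θ i₀ = 0`, so `θ / 2` is again such a null vector.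
lemma two_pow_dvd_of_seidelMatrix_mulVec_eq_zero (m : ℕ) {θ : Fin n → ℤ}
    (hθ : seidelMatrix G *ᵥ θ = 0) {i₀ : Fin n} (h₀ : θ i₀ = 0) (i : Fin n) :
    2 ^ m ∣ θ i := by
  induction m generalizing θ with
  | zero => exact one_dvd _
  | succ m ih =>
    have heven : ∀ j, 2 ∣ θ j := fun j => (ZMod.intCast_zmod_eq_zero_iff_dvd (θ j) 2).mp <| by
      rw [intCast_zmod_two_eq_of_seidelMatrix_mulVec_eq_zero G hθ j i₀, h₀, Int.cast_zero]
    have hhalf : θ = (2 : ℤ) • fun j => θ j / 2 := funext fun j => by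
      simp [Int.mul_ediv_cancel' (heven j)]
    have hθ' : seidelMatrix G *ᵥ (fun j => θ j / 2) = 0 := by
      rw [hhalf, mulVec_smul] at hθ
      exact (smul_eq_zero.mp hθ).resolve_left two_ne_zero
    obtain ⟨c, hc⟩ := ih hθ' (by simp [h₀])
    exact ⟨c, by rw [← Int.mul_ediv_cancel' (heven i), hc]; ring⟩

lemma eq_zero_of_seidelMatrix_mulVec_eq_zero {θ : Fin n → ℤ} (hθ : seidelMatrix G *ᵥ θ = 0)
    {i₀ : Fin n} (h₀ : θ i₀ = 0) : θ = 0 := funext fun i =>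
  Int.eq_zero_of_abs_lt_dvd (two_pow_dvd_of_seidelMatrix_mulVec_eq_zero G _ hθ h₀ i) <| by
    rw [Int.abs_eq_natAbs]
    exact_mod_cast (θ i).natAbs.lt_two_pow_self

lemma eq_smul_of_seidelMatrix_mulVec_eq_zero {φ ψ : Fin n → ℤ} (hφ : seidelMatrix G *ᵥ φ = 0)
    {i₀ : Fin n} (h₀ : φ i₀ = 1) (hψ : seidelMatrix G *ᵥ ψ = 0) : ψ = ψ i₀ • φ :=
  sub_eq_zero.mp <| eq_zero_of_seidelMatrix_mulVec_eq_zero G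
    (by rw [mulVec_sub, mulVec_smul, hφ, hψ, smul_zero, sub_zero]) (i₀ := i₀) (by simp [h₀])

lemma ker_mulVecLin_seidelMatrix_eq_span {φ : Fin n → ℤ} (hφ : seidelMatrix G *ᵥ φ = 0)
    {i₀ : Fin n} (h₀ : φ i₀ = 1) : LinearMap.ker (seidelMatrix G).mulVecLin = ℤ ∙ φ := by
  ext ψ
  rw [LinearMap.mem_ker, mulVecLin_apply, Submodule.mem_span_singleton]
  constructor
  · exact fun hψ => ⟨ψ i₀, (eq_smul_of_seidelMatrix_mulVec_eq_zero G hφ h₀ hψ).symm⟩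
  · rintro ⟨c, rfl⟩
    rw [mulVec_smul, hφ, smul_zero]

lemma seidelMatrix_rank_add_one {φ : Fin n → ℤ} (hφ : seidelMatrix G *ᵥ φ = 0) {i₀ : Fin n}
    (h₀ : φ i₀ = 1) : (seidelMatrix G).rank + 1 = n := by
  have hne : φ ≠ 0 := fun h => one_ne_zero (h₀ ▸ congrFun h i₀)
  simpa using (seidelMatrix G).rank_add_one_of_ker_mulVecLin_eq_span hne
    (ker_mulVecLin_seidelMatrix_eq_span G hφ h₀)

end Seidel

/-- Vertex `0` is the root; for each `m` the vertices `4m+1, …, 4m+4` form a path whose two ends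
are joined to all earlier vertices. The vertices `0, …, 4` span a pentagon. -/
def IsTowerEdge (u v : ℕ) : Prop :=
  u < v ∧ (v = u + 1 ∧ v % 4 ≠ 1 ∨ (v % 4 = 1 ∨ v % 4 = 0) ∧ u ≤ 4 * ((v - 1) / 4))

instance : DecidableRel IsTowerEdge := fun _ _ => by unfold IsTowerEdge; infer_instance

def towerGraph : SimpleGraph ℕ := SimpleGraph.fromRel IsTowerEdge

lemma towerGraph_adj {u v : ℕ} : towerGraph.Adj u v ↔ IsTowerEdge u v ∨ IsTowerEdge v u := by
  rw [towerGraph, SimpleGraph.fromRel_adj, and_iff_right_iff_imp]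
  rintro (h | h) rfl <;> exact h.1.false

instance : DecidableRel towerGraph.Adj := fun _ _ => decidable_of_iff _ towerGraph_adj.symm

def towerSeidel (u v : ℕ) : ℤ := if u = v then 0 else if towerGraph.Adj u v then -1 else 1

/-- The weight of the path added at step `m` is `5 ^ m`; truncated subtraction gives the root
weight `1` as well. -/
def towerVec (v : ℕ) : ℤ := 5 ^ ((v - 1) / 4)

lemma towerVec_four_mul_add_one_add (k : ℕ) {a : ℕ} (ha : a < 4) :
    towerVec (4 * k + 1 + a) = 5 ^ k := by
  rw [towerVec]; congr 1; omega

lemma sum_range_towerVec (k : ℕ) : ∑ v ∈ range (4 * k + 1), towerVec v = 5 ^ k := by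
  induction k with
  | zero => rfl
  | succ k ih =>
    rw [show 4 * (k + 1) + 1 = 4 * k + 1 + 4 by ring, sum_range_add, ih,
      sum_congr rfl fun a ha => towerVec_four_mul_add_one_add k (mem_range.mp ha)]
    simp only [sum_const, card_range, nsmul_eq_mul]
    ring

lemma towerSeidel_new_new (k : ℕ) {a b : ℕ} (ha : a < 4) (hb : b < 4) :
    towerSeidel (4 * k + 1 + a) (4 * k + 1 + b) = towerSeidel (a + 1) (b + 1) := by
  simp only [towerSeidel, towerGraph_adj, IsTowerEdge]
  split_ifs <;> omega

lemma towerSeidel_old_new (k : ℕ) {i a : ℕ} (hi : i < 4 * k + 1) (ha : a < 4) :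
    towerSeidel i (4 * k + 1 + a) = towerSeidel 0 (a + 1) := by
  simp only [towerSeidel, towerGraph_adj, IsTowerEdge]
  split_ifs <;> first | omega | contradiction

lemma towerSeidel_self (u : ℕ) : towerSeidel u u = 0 := if_pos rfl

lemma towerSeidel_comm (u v : ℕ) : towerSeidel u v = towerSeidel v u := by
  simp only [towerSeidel, eq_comm, towerGraph.adj_comm]

lemma towerSeidel_pentagon_row_sum : ∀ i < 5, ∑ v ∈ range 5, towerSeidel i v = 0 := by
  decide

lemma towerSeidel_row_sum (k : ℕ) :
    ∀ i < 4 * k + 1, ∑ v ∈ range (4 * k + 1), towerSeidel i v * towerVec v = 0 := by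
  have pentagon (i : ℕ) (hi : i < 5) :
      ∑ a ∈ range 4, towerSeidel i (a + 1) + towerSeidel i 0 = 0 := by
    rw [← sum_range_succ' (towerSeidel i)]
    exact towerSeidel_pentagon_row_sum i hi
  induction k with
  | zero => intro i hi; simp [show i = 0 by omega, towerSeidel_self]
  | succ k ih =>
    intro i hi
    have hpath : ∑ a ∈ range 4, towerSeidel i (4 * k + 1 + a) * towerVec (4 * k + 1 + a) =
        (∑ a ∈ range 4, towerSeidel i (4 * k + 1 + a)) * 5 ^ k := by
      rw [sum_mul]
      exact sum_congr rfl fun a ha => by rw [towerVec_four_mul_add_one_add k (mem_range.mp ha)]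
    rw [show 4 * (k + 1) + 1 = 4 * k + 1 + 4 by ring, sum_range_add, hpath]
    rcases lt_or_ge i (4 * k + 1) with hold | hnew
    · rw [ih i hold, sum_congr rfl fun a ha => towerSeidel_old_new k hold (mem_range.mp ha)]
      have := pentagon 0 (by norm_num)
      rw [towerSeidel_self, add_zero] at this
      rw [this, zero_mul, add_zero]
    · obtain ⟨b, hb, rfl⟩ : ∃ b < 4, i = 4 * k + 1 + b := ⟨i - (4 * k + 1), by omega, by omega⟩
      have hold : ∑ v ∈ range (4 * k + 1), towerSeidel (4 * k + 1 + b) v * towerVec v =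
          towerSeidel (b + 1) 0 * 5 ^ k := by
        rw [← sum_range_towerVec k, mul_sum]
        refine sum_congr rfl fun v hv => ?_
        rw [towerSeidel_comm, towerSeidel_old_new k (mem_range.mp hv) hb, towerSeidel_comm]
      rw [hold, sum_congr rfl fun a ha => towerSeidel_new_new k hb (mem_range.mp ha)]
      linear_combination (5 : ℤ) ^ k * pentagon (b + 1) (by omega)

lemma seidelMatrix_comap_towerGraph_apply {n : ℕ} (i j : Fin n) :
    seidelMatrix (towerGraph.comap Fin.val) i j = towerSeidel i j := by
  simp only [seidelMatrix, of_apply, SimpleGraph.comap_adj, towerSeidel, Fin.val_inj]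

lemma seidelMatrix_comap_towerGraph_mulVec (k : ℕ) :
    seidelMatrix (towerGraph.comap (Fin.val : Fin (4 * k + 1) → ℕ)) *ᵥ (fun i => towerVec i) =
      0 := by
  funext i
  simp only [mulVec, dotProduct, seidelMatrix_comap_towerGraph_apply, Pi.zero_apply]
  rw [Fin.sum_univ_eq_sum_range (fun v => towerSeidel i v * towerVec v)]
  exact towerSeidel_row_sum k i i.2

theorem exists_graph_unbounded_null_vector_general (k : ℕ) :
    ∃ (G : SimpleGraph (Fin (4 * k + 1))) (_ : DecidableRel G.Adj)
      (φ : Fin (4 * k + 1) → ℤ),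
      (seidelMatrix G).det = 0 ∧
      (seidelMatrix G).rank = 4 * k ∧
      (seidelMatrix G).mulVec φ = 0 ∧
      Finset.univ.gcd φ = 1 ∧
      (∀ i, φ i ≤ 5 ^ (k - 1)) ∧
      (∃ i, φ i = 5 ^ (k - 1)) ∧
      (∑ i, φ i) = 5 ^ k ∧
      (2 ≤ k → ¬∃ ψ : Fin (4 * k + 1) → ℤ,
        (∀ i, ψ i = 1 ∨ ψ i = -1) ∧ (seidelMatrix G).mulVec ψ = 0) := by
  set G := towerGraph.comap (Fin.val : Fin (4 * k + 1) → ℕ)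
  set φ : Fin (4 * k + 1) → ℤ := fun i => towerVec i
  have hφ : seidelMatrix G *ᵥ φ = 0 := seidelMatrix_comap_towerGraph_mulVec k
  have hφ₀ : φ 0 = 1 := by simp [φ, towerVec]
  let top : Fin (4 * k + 1) := ⟨4 * k, by omega⟩
  have htop : φ top = 5 ^ (k - 1) := by
    show (5 : ℤ) ^ ((4 * k - 1) / 4) = _; congr 1; omega
  refine ⟨G, inferInstance, φ, ?_, ?_, hφ, gcd_eq_one_of_eq_one (mem_univ 0) hφ₀, fun i => ?_,
    ⟨top, htop⟩, ?_, ?_⟩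
  · exact exists_mulVec_eq_zero_iff.mp ⟨φ, fun h => one_ne_zero (hφ₀ ▸ congrFun h 0), hφ⟩
  · have := seidelMatrix_rank_add_one G hφ hφ₀
    omega
  · exact pow_le_pow_right₀ (by norm_num) (by omega)
  · exact (Fin.sum_univ_eq_sum_range (fun v => towerVec v) _).trans (sum_range_towerVec k)
  · rintro hk ⟨ψ, hψ₁, hψ⟩
    have hψtop := congrFun (eq_smul_of_seidelMatrix_mulVec_eq_zero G hφ hφ₀ hψ) top
    rw [Pi.smul_apply, smul_eq_mul, htop] at hψtop
    have h5 : (5 : ℤ) ≤ 5 ^ (k - 1) := le_self_pow₀ (by norm_num) (by omega)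
    rcases hψ₁ top with h | h <;> rcases hψ₁ 0 with h₀ | h₀ <;> rw [h, h₀] at hψtop <;> omega

theorem exists_graph_unbounded_null_vector (k : ℕ) (hk : 1 ≤ k) :
    ∃ (G : SimpleGraph (Fin (4 * k + 1))) (_ : DecidableRel G.Adj)
      (φ : Fin (4 * k + 1) → ℤ),
      (seidelMatrix G).det = 0 ∧
      (seidelMatrix G).rank = 4 * k ∧
      (seidelMatrix G).mulVec φ = 0 ∧
      Finset.univ.gcd φ = 1 ∧
      (∀ i, φ i ≤ 5 ^ (k - 1)) ∧
      (∃ i, φ i = 5 ^ (k - 1)) ∧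
      (∑ i, φ i) = 5 ^ k ∧
      (2 ≤ k → ¬∃ ψ : Fin (4 * k + 1) → ℤ,
        (∀ i, ψ i = 1 ∨ ψ i = -1) ∧ (seidelMatrix G).mulVec ψ = 0) :=
  exists_graph_unbounded_null_vector_general k
end
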